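/- Consider a β-Ginibre point process where the squared distances from the origin to points X_i, i ∈ ℕ, are independent with Y_i ~ Gamma(i, c/β), and where no point selection occurs (no beamforming). The mean of the total received power E[∑_{i∈ℕ} β P̄_r(Y_i) 1_{r_e² ≤ Y_i ≤ τ²}] equals (2c/(α−2)) (P̄_r(r_e²)(r_e² + z²) − P̄_r(τ²)(τ² + z²)), where P̄_r(u) = P_t κ^{-1}(u + z²)^{-α/2} and c = πλ. In particular this mean is the same as for a homogeneous PPP of intensity λ and is independent of β. -/

import Mathlib

/-!
The gamma densities of all shapes `i + 1` with a common rate `θ` sum to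
`θ e^{-θu} ∑ (θu)^i / i! = θ` on `[0, ∞)`, so the intensity measure `∑ᵢ Law(Yᵢ)` of the
points is `θ` times Lebesgue measure on `[0, ∞)`. Campbell's formula
`E ∑ᵢ g(Yᵢ) = ∫ g d(∑ᵢ Law(Yᵢ))` then gives the mean as `θ ∫_{r_e²}^{τ²} β P̄(u) du`;
with `θ = πλ/β` the thinning factor `β` cancels, and the power law integrates in closed form.
-/

open MeasureTheory ProbabilityTheory Set Real ENNReal

theorem hasSum_gammaPDFReal_succ (θ : ℝ) {u : ℝ} (hu : 0 ≤ u) :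
    HasSum (fun i : ℕ => gammaPDFReal (↑(i + 1)) θ u) θ := by
  have hterm (i : ℕ) : gammaPDFReal (↑(i + 1)) θ u
      = θ * Real.exp (-(θ * u)) * ((θ * u) ^ i / i.factorial) := by
    rw [gammaPDFReal, if_pos hu, Real.rpow_natCast, Nat.cast_add_one, add_sub_cancel_right,
      Real.rpow_natCast, Real.Gamma_nat_eq_factorial, mul_pow, pow_succ]
    ring
  have hexp := (NormedSpace.expSeries_div_hasSum_exp (θ * u)).mul_left (θ * Real.exp (-(θ * u)))
  rw [← Real.exp_eq_exp_ℝ, mul_assoc, ← Real.exp_add, neg_add_cancel, Real.exp_zero,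
    mul_one] at hexp
  simpa only [hterm] using hexp

theorem tsum_gammaPDF_succ {θ : ℝ} (hθ : 0 < θ) (u : ℝ) :
    ∑' i : ℕ, gammaPDF (↑(i + 1)) θ u
      = (Ici 0).indicator (fun _ => ENNReal.ofReal θ) u := by
  rcases le_or_gt 0 u with hu | hu
  · have hsum := hasSum_gammaPDFReal_succ θ hu
    rw [indicator_of_mem (mem_Ici.mpr hu)]
    exact (ENNReal.ofReal_tsum_of_nonneg (fun i => gammaPDFReal_nonneg (by positivity) hθ u)
      hsum.summable).symm.trans (congrArg ENNReal.ofReal hsum.tsum_eq)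
  · simp [gammaPDF_of_neg hu, indicator_of_notMem (notMem_Ici.mpr hu)]

theorem sum_gammaMeasure_succ {θ : ℝ} (hθ : 0 < θ) :
    Measure.sum (fun i : ℕ => gammaMeasure (↑(i + 1)) θ)
      = ENNReal.ofReal θ • volume.restrict (Ici 0) := by
  have hpdf (i : ℕ) : Measurable (gammaPDF (↑(i + 1)) θ) :=
    ENNReal.measurable_ofReal.comp (measurable_gammaPDFReal _ _)
  simp only [gammaMeasure]
  rw [← withDensity_tsum hpdf, ← withDensity_const, ← withDensity_indicator measurableSet_Ici]
  congr with u
  rw [tsum_apply (Pi.summable.2 fun _ => ENNReal.summable), tsum_gammaPDF_succ hθ]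

theorem integral_tsum_comp_eq_integral_sum_map {ι Ω α E : Type*} [Countable ι]
    [MeasurableSpace Ω] [MeasurableSpace α] [NormedAddCommGroup E] [NormedSpace ℝ E]
    {μ : Measure Ω} {X : ι → Ω → α} (hX : ∀ i, AEMeasurable (X i) μ) {g : α → E}
    (hg : Integrable g (Measure.sum fun i => μ.map (X i))) :
    ∫ ω, ∑' i, g (X i ω) ∂μ = ∫ x, g x ∂(Measure.sum fun i => μ.map (X i)) := by
  have hgi (i : ι) : AEStronglyMeasurable g (μ.map (X i)) :=
    hg.aestronglyMeasurable.mono_measure (Measure.le_sum _ i)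
  have hfin := hg.hasFiniteIntegral
  rw [HasFiniteIntegral, lintegral_sum_measure] at hfin
  simp_rw [lintegral_map' (hgi _).enorm (hX _)] at hfin
  rw [integral_sum_measure hg, integral_tsum (f := fun i ω => g (X i ω))
    (fun i => (hgi i).comp_aemeasurable (hX i)) hfin.ne]
  exact tsum_congr fun i => (integral_map (hX i) (hgi i)).symm

theorem integral_tsum_comp_of_map_eq_gammaMeasure {Ω E : Type*} [MeasurableSpace Ω]
    [NormedAddCommGroup E] [NormedSpace ℝ E] {μ : Measure Ω} {θ : ℝ} (hθ : 0 < θ)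
    {Y : ℕ → Ω → ℝ} (hYm : ∀ i, AEMeasurable (Y i) μ)
    (hY : ∀ i, μ.map (Y i) = gammaMeasure (↑(i + 1)) θ) {g : ℝ → E}
    (hg : IntegrableOn g (Ici 0)) :
    ∫ ω, ∑' i, g (Y i ω) ∂μ = θ • ∫ u in Ici 0, g u := by
  have hsum : Measure.sum (fun i => μ.map (Y i))
      = ENNReal.ofReal θ • volume.restrict (Ici 0) := by
    simp_rw [hY]
    exact sum_gammaMeasure_succ hθ
  rw [integral_tsum_comp_eq_integral_sum_map hYm (hsum ▸ hg.smul_measure ofReal_ne_top), hsum,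
    integral_smul_measure, ENNReal.toReal_ofReal hθ.le]

theorem intervalIntegral.integral_add_const_rpow {a b c r : ℝ} (hr : r ≠ -1)
    (ha : 0 < a + c) (hb : 0 < b + c) :
    ∫ u in a..b, (u + c) ^ r = ((b + c) ^ (r + 1) - (a + c) ^ (r + 1)) / (r + 1) := by
  rw [intervalIntegral.integral_comp_add_right (· ^ r),
    integral_rpow (Or.inr ⟨hr, notMem_uIcc_of_lt ha hb⟩)]

theorem integrable_indicator_Icc_const_mul_add_rpow (K : ℝ) {a b c r : ℝ} (ha : 0 ≤ a)
    (hc : 0 < c) : Integrable ((Icc a b).indicator fun u => K * (u + c) ^ r) := by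
  refine ContinuousOn.integrableOn_Icc ?_ |>.integrable_indicator measurableSet_Icc
  refine continuousOn_const.mul ((continuousOn_id.add continuousOn_const).rpow_const ?_)
  exact fun u hu => Or.inl (add_pos_of_nonneg_of_pos (ha.trans hu.1) hc).ne'

theorem setIntegral_Ici_indicator_Icc_const_mul_add_rpow (K : ℝ) {a b c r : ℝ} (ha : 0 ≤ a)
    (hab : a ≤ b) (hc : 0 < c) (hr : r ≠ -1) :
    ∫ u in Ici 0, (Icc a b).indicator (fun u => K * (u + c) ^ r) u
      = K * (((b + c) ^ (r + 1) - (a + c) ^ (r + 1)) / (r + 1)) := by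
  rw [setIntegral_indicator measurableSet_Icc, inter_eq_right.mpr
    (Icc_subset_Ici_self.trans (Ici_subset_Ici.mpr ha)), integral_Icc_eq_integral_Ioc,
    ← intervalIntegral.integral_of_le hab, intervalIntegral.integral_const_mul,
    intervalIntegral.integral_add_const_rpow hr (by positivity) (by linarith)]

theorem beta_ginibre_mean_power_no_bf_general {Ω : Type*} [MeasureSpace Ω]
    (lam β Pt κ z α re τ : ℝ) (hlam : 0 < lam) (hβ0 : 0 < β)
    (hz : 0 < z) (hα : 2 < α)
    (hre : 0 ≤ re) (hrτ : re ≤ τ)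
    (Y : ℕ → Ω → ℝ) (hYm : ∀ i, Measurable (Y i))
    (hY : ∀ i, 1 ≤ i → Measure.map (Y i) ℙ = gammaMeasure i (Real.pi * lam / β)) :
    (∫ ω, (∑' i : ℕ,
        β * (Pt * κ⁻¹ * (Y (i + 1) ω + z ^ 2) ^ (-(α / 2))) *
          Set.indicator (Set.Icc (re ^ 2) (τ ^ 2)) (fun _ => (1 : ℝ)) (Y (i + 1) ω)) ∂ℙ) =
      (2 * (Real.pi * lam) / (α - 2)) *
        (Pt * κ⁻¹ * (re ^ 2 + z ^ 2) ^ (-(α / 2)) * (re ^ 2 + z ^ 2)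
          - Pt * κ⁻¹ * (τ ^ 2 + z ^ 2) ^ (-(α / 2)) * (τ ^ 2 + z ^ 2)) := by
  have hθ : 0 < Real.pi * lam / β := by positivity
  have hz2 : 0 < z ^ 2 := by positivity
  have hr : -(α / 2) ≠ -1 := by intro h; linarith
  have hα2 : α - 2 ≠ 0 := by linarith
  have hf (u : ℝ) : β * (Pt * κ⁻¹ * (u + z ^ 2) ^ (-(α / 2))) *
      (Icc (re ^ 2) (τ ^ 2)).indicator (fun _ => 1) u =
      (Icc (re ^ 2) (τ ^ 2)).indicator
        (fun u => β * Pt * κ⁻¹ * (u + z ^ 2) ^ (-(α / 2))) u := by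
    simp [indicator_apply, mul_assoc]
  simp only [hf]
  rw [integral_tsum_comp_of_map_eq_gammaMeasure hθ (Y := fun i => Y (i + 1))
      (fun i => (hYm (i + 1)).aemeasurable) (fun i => hY (i + 1) i.succ_pos)
      (integrable_indicator_Icc_const_mul_add_rpow _ (sq_nonneg re) hz2).integrableOn,
    setIntegral_Ici_indicator_Icc_const_mul_add_rpow _ (sq_nonneg re)
      (pow_le_pow_left₀ hre hrτ 2) hz2 hr,
    rpow_add_one (by positivity), rpow_add_one (by positivity), smul_eq_mul,
    show -(α / 2) + 1 = -((α - 2) / 2) by ring]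
  generalize κ⁻¹ = K
  field_simp
  ring

/-- Mean total received power in a β-Ginibre network without beamforming:
with squared distances `Y i ~ Gamma(i, πλ/β)` independent, the mean of
`∑_i β P̄(Y_i) 1_{r_e² ≤ Y_i ≤ τ²}` equals the homogeneous-PPP value,
independently of `β`. -/
theorem beta_ginibre_mean_power_no_bf {Ω : Type*} [MeasureSpace Ω]
    [IsProbabilityMeasure (ℙ : Measure Ω)]
    (lam β Pt κ z α re τ : ℝ) (hlam : 0 < lam) (hβ0 : 0 < β) (hβ1 : β ≤ 1)
    (hPt : 0 < Pt) (hκ : 0 < κ) (hz : 0 < z) (hα : 2 < α)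
    (hre : 0 ≤ re) (hrτ : re ≤ τ)
    (Y : ℕ → Ω → ℝ) (hYm : ∀ i, Measurable (Y i))
    (hY : ∀ i, 1 ≤ i → Measure.map (Y i) ℙ = gammaMeasure i (Real.pi * lam / β))
    (hindep : iIndepFun Y ℙ) :
    (∫ ω, (∑' i : ℕ,
        β * (Pt * κ⁻¹ * (Y (i + 1) ω + z ^ 2) ^ (-(α / 2))) *
          Set.indicator (Set.Icc (re ^ 2) (τ ^ 2)) (fun _ => (1 : ℝ)) (Y (i + 1) ω)) ∂ℙ) =
      (2 * (Real.pi * lam) / (α - 2)) *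
        (Pt * κ⁻¹ * (re ^ 2 + z ^ 2) ^ (-(α / 2)) * (re ^ 2 + z ^ 2)
          - Pt * κ⁻¹ * (τ ^ 2 + z ^ 2) ^ (-(α / 2)) * (τ ^ 2 + z ^ 2)) :=
  beta_ginibre_mean_power_no_bf_general lam β Pt κ z α re τ hlam hβ0 hz hα hre hrτ Y hYm hY
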